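/- arXiv:2306.02640 — 4 statements merged into one kernel-verified Lean document; each statement's English description precedes it below -/
import Mathlib

section
/- Let k₀ be a field, k₁ a field extension of k₀, and f₁, …, f_r ∈ k₀[[t₁,…,t_n]] formal power series. If f₁, …, f_r are linearly dependent over the field k₁(t₁,…,t_n), then they are linearly dependent over k₀(t₁,…,t_n). -/
/-!
Pick a nonzero coefficient `c ∈ k₁` of some `Aᵢ` and a `k₀`-linear functional `ℓ : k₁ → k₀`
with `ℓ c ≠ 0`. Applying `ℓ` to every coefficient is `k₀[[t]]`-linear on series of the form
`φ * f` with `f` defined over `k₀`, so it turns the relation `∑ Aᵢ fᵢ = 0` into a relation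
`∑ ℓ(Aᵢ) fᵢ = 0` over `k₀`, and `ℓ(Aᵢ) ≠ 0` because its coefficient at `c`'s monomial is `ℓ c`.
-/

namespace MvPolynomial

variable {σ R A : Type*} [CommSemiring R] [CommSemiring A]

noncomputable def mapAddMonoidHom (g : A →+ R) (p : MvPolynomial σ A) : MvPolynomial σ R :=
  AddMonoidAlgebra.map g p

@[simp]
theorem coeff_mapAddMonoidHom (g : A →+ R) (p : MvPolynomial σ A) (m : σ →₀ ℕ) :
    coeff m (p.mapAddMonoidHom g) = g (coeff m p) :=
  coeff_addMonoidAlgebraMap g p m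

variable [Algebra R A]

theorem linearMap_coeff_mul_map (ℓ : A →ₗ[R] R) (p : MvPolynomial σ A)
    (f : MvPowerSeries σ R) (m : σ →₀ ℕ) :
    ℓ (MvPowerSeries.coeff m ((p : MvPowerSeries σ A) * MvPowerSeries.map (algebraMap R A) f)) =
      MvPowerSeries.coeff m ((p.mapAddMonoidHom ℓ.toAddMonoidHom : MvPowerSeries σ R) * f) := by
  classical
  rw [MvPowerSeries.coeff_mul, MvPowerSeries.coeff_mul, map_sum]
  simp only [MvPowerSeries.coeff_map, coeff_coe, coeff_mapAddMonoidHom,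
    LinearMap.toAddMonoidHom_coe]
  refine Finset.sum_congr rfl fun d _ => ?_
  rw [← Algebra.commutes, ← Algebra.smul_def, map_smul, smul_eq_mul, mul_comm]

theorem sum_coe_mapAddMonoidHom_mul_eq_zero {ι : Type*} (s : Finset ι) (ℓ : A →ₗ[R] R)
    (p : ι → MvPolynomial σ A) (f : ι → MvPowerSeries σ R)
    (h : ∑ i ∈ s, (p i : MvPowerSeries σ A) * MvPowerSeries.map (algebraMap R A) (f i) = 0) :
    ∑ i ∈ s, ((p i).mapAddMonoidHom ℓ.toAddMonoidHom : MvPowerSeries σ R) * f i = 0 := by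
  ext m
  simp only [map_sum, ← linearMap_coeff_mul_map, map_zero]
  rw [← map_sum ℓ, ← map_sum, h, map_zero, map_zero]

end MvPolynomial

/-- Descent of linear dependence: if power series `f₁, …, f_r ∈ k₀[[t₁,…,t_n]]` are linearly
dependent over `k₁(t₁,…,t_n)` for a field extension `k₁/k₀` (equivalently, admit a nontrivial
linear relation with polynomial coefficients over `k₁`), then they are linearly dependent
over `k₀(t₁,…,t_n)`. -/
theorem linear_dependence_descends (k₀ k₁ : Type*) [Field k₀] [Field k₁] [Algebra k₀ k₁]
    (n r : ℕ) (f : Fin r → MvPowerSeries (Fin n) k₀)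
    (h : ∃ A : Fin r → MvPolynomial (Fin n) k₁, (∃ i, A i ≠ 0) ∧
      ∑ i, (MvPolynomial.coeToMvPowerSeries.ringHom (A i)) *
        (MvPowerSeries.map (algebraMap k₀ k₁) (f i)) = 0) :
    ∃ B : Fin r → MvPolynomial (Fin n) k₀, (∃ i, B i ≠ 0) ∧
      ∑ i, (MvPolynomial.coeToMvPowerSeries.ringHom (B i)) * f i = 0 := by
  obtain ⟨A, ⟨i₀, hA₀⟩, hA⟩ := h
  obtain ⟨m₀, hm₀⟩ := MvPolynomial.ne_zero_iff.mp hA₀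
  obtain ⟨ℓ, hℓ⟩ := Module.Projective.exists_dual_ne_zero k₀ hm₀
  refine ⟨fun i => (A i).mapAddMonoidHom ℓ.toAddMonoidHom,
    ⟨i₀, MvPolynomial.ne_zero_iff.mpr ⟨m₀, by simpa using hℓ⟩⟩, ?_⟩
  simp only [MvPolynomial.coeToMvPowerSeries.ringHom_apply] at hA ⊢
  exact MvPolynomial.sum_coe_mapAddMonoidHom_mul_eq_zero _ ℓ A f hA
end

section
/- Let k be an arbitrary field of characteristic p > 0 with perfect closure k_p, and let f ∈ k[[t₁,…,t_n]] be algebraic over k(t₁,…,t_n). Then the degree of the field extension k(t₁,…,t_n)(f) over k(t₁,…,t_n) equals the degree of k_p(t₁,…,t_n)(f) over k_p(t₁,…,t_n). -/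
/-!
Pushing an annihilating polynomial of `f` from `k[t][X]` to `K[t][X]` along a field extension
`k → K` keeps its `X`-degree. Conversely, let `A ∈ K[t][X]` annihilate `f` and let `φ : K → k` be
`k`-linear. Since `f` has its coefficients in `k`, applying `φ` to every coefficient of `A` commutes
with evaluation at `f`, so it yields an annihilator over `k[t]` of no larger degree, which is nonzero
once `φ` is chosen not to kill some coefficient of `A`. Hence the minimal degrees agree for every
extension `K` of `k`, in particular for the perfect closure.
-/

open Polynomial

section CoefficientMaps

variable {σ R S : Type*} [CommSemiring R] [CommSemiring S]

theorem MvPolynomial.coe_map (ι : R →+* S) (a : MvPolynomial σ R) :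
    ((MvPolynomial.map ι a : MvPolynomial σ S) : MvPowerSeries σ S) =
      MvPowerSeries.map ι (a : MvPowerSeries σ R) := by
  ext m
  simp only [MvPolynomial.coeff_coe, MvPowerSeries.coeff_map, MvPolynomial.coeff_map]

theorem MvPowerSeries.map_eval₂_coe (ι : R →+* S) (f : MvPowerSeries σ R)
    (A : (MvPolynomial σ R)[X]) :
    (A.map (MvPolynomial.map ι)).eval₂ MvPolynomial.coeToMvPowerSeries.ringHom (map ι f) =
      map ι (A.eval₂ MvPolynomial.coeToMvPowerSeries.ringHom f) := by
  rw [eval₂_map, hom_eval₂]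
  exact congrArg (Polynomial.eval₂ · _ A) (RingHom.ext fun a => MvPolynomial.coe_map ι a)

noncomputable def Polynomial.mapMvCoeffs (g : R →+ S) (A : (MvPolynomial σ R)[X]) :
    (MvPolynomial σ S)[X] :=
  let gₜ : MvPolynomial σ R →+ MvPolynomial σ S :=
    { toFun := AddMonoidAlgebra.map g
      map_zero' := AddMonoidAlgebra.map_zero g
      map_add' := AddMonoidAlgebra.map_add g }
  ⟨AddMonoidAlgebra.map gₜ A.toFinsupp⟩

theorem Polynomial.coeff_coeff_mapMvCoeffs (g : R →+ S) (A : (MvPolynomial σ R)[X]) (i : ℕ)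
    (m : σ →₀ ℕ) : ((A.mapMvCoeffs g).coeff i).coeff m = g ((A.coeff i).coeff m) := rfl

theorem Polynomial.natDegree_mapMvCoeffs_le (g : R →+ S) (A : (MvPolynomial σ R)[X]) :
    (A.mapMvCoeffs g).natDegree ≤ A.natDegree := by
  refine natDegree_le_iff_coeff_eq_zero.mpr fun i hi => MvPolynomial.ext _ _ fun m => ?_
  rw [coeff_coeff_mapMvCoeffs, coeff_eq_zero_of_natDegree_lt hi]
  simp

end CoefficientMaps

theorem Polynomial.coeff_eval₂_mapMvCoeffs {σ k K : Type*} [CommSemiring k] [CommSemiring K]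
    [Algebra k K] (φ : K →ₗ[k] k) (A : (MvPolynomial σ K)[X]) (g : MvPowerSeries σ k)
    (m : σ →₀ ℕ) :
    MvPowerSeries.coeff m ((A.mapMvCoeffs φ).eval₂ MvPolynomial.coeToMvPowerSeries.ringHom g) =
      φ (MvPowerSeries.coeff m
        (A.eval₂ MvPolynomial.coeToMvPowerSeries.ringHom (MvPowerSeries.map (algebraMap k K) g))) := by
  classical
  have hA := A.natDegree.lt_succ_self
  rw [eval₂_eq_sum_range' _ ((A.natDegree_mapMvCoeffs_le _).trans_lt hA),
    eval₂_eq_sum_range' _ hA, map_sum, map_sum, map_sum]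
  refine Finset.sum_congr rfl fun i _ => ?_
  rw [← map_pow, MvPowerSeries.coeff_mul, MvPowerSeries.coeff_mul, map_sum]
  refine Finset.sum_congr rfl fun q _ => ?_
  rw [MvPolynomial.coeToMvPowerSeries.ringHom_apply,
    MvPolynomial.coeToMvPowerSeries.ringHom_apply, MvPolynomial.coeff_coe,
    MvPolynomial.coeff_coe, coeff_coeff_mapMvCoeffs, MvPowerSeries.coeff_map,
    φ.map_mul_algebraMap, Algebra.algebraMap_self_apply]
  rfl

namespace MvPowerSeries

variable {σ R : Type*} [CommSemiring R]

/-- Over a field the infimum of these degrees is `[R(t)(f) : R(t)]`, and it is `0` when `f` is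
transcendental. -/
def annihilatorDegrees (f : MvPowerSeries σ R) : Set ℕ :=
  {d | ∃ A : (MvPolynomial σ R)[X], A ≠ 0 ∧
    A.eval₂ MvPolynomial.coeToMvPowerSeries.ringHom f = 0 ∧ A.natDegree = d}

theorem annihilatorDegrees_subset_map {S : Type*} [CommSemiring S] {ι : R →+* S}
    (hι : Function.Injective ι) (f : MvPowerSeries σ R) :
    annihilatorDegrees f ⊆ annihilatorDegrees (map ι f) := by
  rintro _ ⟨A, hA, hAf, rfl⟩
  have hmap := MvPolynomial.map_injective (σ := σ) ι hι
  exact ⟨A.map (MvPolynomial.map ι), (Polynomial.map_ne_zero_iff hmap).mpr hA,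
    by rw [map_eval₂_coe, hAf, map_zero], natDegree_map_eq_of_injective hmap A⟩

variable {k K : Type*} [Field k] [CommRing K] [Algebra k K]

theorem exists_mem_annihilatorDegrees_le_of_mem_map (f : MvPowerSeries σ k) {d : ℕ}
    (hd : d ∈ annihilatorDegrees (map (algebraMap k K) f)) :
    ∃ e ∈ annihilatorDegrees f, e ≤ d := by
  obtain ⟨A', hA', hA'f, rfl⟩ := hd
  obtain ⟨m, hm⟩ := MvPolynomial.ne_zero_iff.mp (leadingCoeff_ne_zero.mpr hA')
  obtain ⟨φ, hφ⟩ := Module.Projective.exists_dual_ne_zero k hm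
  refine ⟨_, ⟨A'.mapMvCoeffs φ, fun h0 => hφ ?_, ?_, rfl⟩, A'.natDegree_mapMvCoeffs_le _⟩
  · simpa [h0] using (coeff_coeff_mapMvCoeffs (φ : K →+ k) A' A'.natDegree m).symm
  · ext n
    rw [coeff_eval₂_mapMvCoeffs, hA'f]
    simp

theorem sInf_annihilatorDegrees_map [Nontrivial K] (f : MvPowerSeries σ k) :
    sInf (annihilatorDegrees f) = sInf (annihilatorDegrees (map (algebraMap k K) f)) := by
  simpa only [Set.image_id] using monotoneOn_id.csInf_eq_of_subset_of_forall_exists_le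
    (OrderBot.bddBelow _) (annihilatorDegrees_subset_map (algebraMap k K).injective f)
    (fun _ => exists_mem_annihilatorDegrees_le_of_mem_map f)

end MvPowerSeries

theorem degree_invariant_under_perfect_closure_general (k : Type*) [Field k] (p : ℕ) [Fact p.Prime]
    [CharP k p] (n : ℕ) (f : MvPowerSeries (Fin n) k) :
    sInf {d : ℕ | ∃ A : Polynomial (MvPolynomial (Fin n) k), A ≠ 0 ∧
        Polynomial.eval₂ MvPolynomial.coeToMvPowerSeries.ringHom f A = 0 ∧ A.natDegree = d} =
    sInf {d : ℕ | ∃ A : Polynomial (MvPolynomial (Fin n) (PerfectClosure k p)), A ≠ 0 ∧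
        Polynomial.eval₂ MvPolynomial.coeToMvPowerSeries.ringHom
          (MvPowerSeries.map (PerfectClosure.of k p) f) A = 0 ∧ A.natDegree = d} :=
  letI := (PerfectClosure.of k p).toAlgebra
  MvPowerSeries.sInf_annihilatorDegrees_map f

/-- Passing to the perfect closure does not change the algebraicity degree: for `f ∈ k[[t₁,…,t_n]]`
algebraic over `k(t₁,…,t_n)`, the degree `[k(t)(f) : k(t)]` — i.e. the minimal `y`-degree of a
nonzero annihilating polynomial with coefficients in `k[t₁,…,t_n]` — equals the corresponding
degree over the perfect closure `k_p`. -/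
theorem degree_invariant_under_perfect_closure (k : Type*) [Field k] (p : ℕ) [Fact p.Prime]
    [CharP k p] (n : ℕ) (f : MvPowerSeries (Fin n) k)
    (halg : ∃ A : Polynomial (MvPolynomial (Fin n) k), A ≠ 0 ∧
      Polynomial.eval₂ MvPolynomial.coeToMvPowerSeries.ringHom f A = 0) :
    sInf {d : ℕ | ∃ A : Polynomial (MvPolynomial (Fin n) k), A ≠ 0 ∧
        Polynomial.eval₂ MvPolynomial.coeToMvPowerSeries.ringHom f A = 0 ∧ A.natDegree = d} =
    sInf {d : ℕ | ∃ A : Polynomial (MvPolynomial (Fin n) (PerfectClosure k p)), A ≠ 0 ∧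
        Polynomial.eval₂ MvPolynomial.coeToMvPowerSeries.ringHom
          (MvPowerSeries.map (PerfectClosure.of k p) f) A = 0 ∧ A.natDegree = d} :=
  degree_invariant_under_perfect_closure_general k p n f
end

section
/- Let k be a field and A, B ∈ k[t₁,…,t_n] nonzero polynomials. Then the Newton polytope of the product satisfies NP(AB) = NP(A) + NP(B), where + denotes the Minkowski sum. -/
open scoped Pointwise

/-- The Newton polytope of a multivariate polynomial: the convex hull in `ℝⁿ` of its exponent
vectors. -/
noncomputable def newtonPolytope {k : Type*} [Field k] {n : ℕ} (A : MvPolynomial (Fin n) k) :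
    Set (Fin n → ℝ) :=
  convexHull ℝ ((fun d : Fin n →₀ ℕ => fun i => (d i : ℝ)) '' (A.support : Set (Fin n →₀ ℕ)))

/-! Exponents multiply into sums, so `NP(AB) ⊆ NP(A) + NP(B)`. Conversely, a vertex `v` of
`NP(A) + NP(B)` is a sum `α + β` of exponents of `A` and `B` in only one way: from a second
decomposition `α' + β'` one gets `v` as the midpoint of `α + β'` and `α' + β`. Hence the coefficient
of `t^(α + β)` in `AB` is the single product `a_α b_β ≠ 0`, and since a polytope is the convex hull
of its vertices, `NP(A) + NP(B) ⊆ NP(AB)`. -/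

theorem UniqueAdd.of_add_mem_extremePoints_convexHull {𝕜 E : Type*} [Field 𝕜] [LinearOrder 𝕜]
    [IsStrictOrderedRing 𝕜] [AddCommGroup E] [Module 𝕜 E] {S T : Finset E} {s t : E}
    (hs : s ∈ S) (ht : t ∈ T)
    (h : s + t ∈ (convexHull 𝕜 ((S : Set E) + (T : Set E))).extremePoints 𝕜) :
    UniqueAdd S T s t := by
  intro s' t' hs' ht' hsum
  have mem_hull {x y : E} (hx : x ∈ S) (hy : y ∈ T) :
      x + y ∈ convexHull 𝕜 ((S : Set E) + (T : Set E)) :=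
    subset_convexHull 𝕜 _ (Set.add_mem_add hx hy)
  have midpoint : s + t ∈ openSegment 𝕜 (s + t') (s' + t) := by
    refine ⟨1 / 2, 1 / 2, by norm_num, by norm_num, by norm_num, ?_⟩
    rw [eq_sub_of_add_eq hsum]
    module
  obtain ⟨hleft, hright⟩ :=
    (mem_extremePoints.1 h).2 _ (mem_hull hs ht') _ (mem_hull hs' ht) midpoint
  exact ⟨add_right_cancel hright, add_left_cancel hleft⟩

theorem IsCompact.subset_of_extremePoints_subset {E : Type*} [AddCommGroup E] [Module ℝ E]
    [TopologicalSpace E] [IsTopologicalAddGroup E] [T2Space E] [ContinuousSMul ℝ E]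
    [LocallyConvexSpace ℝ E] {K P : Set E} (hK : IsCompact K) (hKc : Convex ℝ K)
    (hP : IsClosed P) (hPc : Convex ℝ P) (h : K.extremePoints ℝ ⊆ P) : K ⊆ P := by
  rw [← closure_convexHull_extremePoints hK hKc]
  exact closure_minimal (convexHull_min h hPc) hP

namespace MvPolynomial

variable {R σ : Type*} [CommSemiring R]

theorem coeff_mul_add_of_uniqueAdd {p q : MvPolynomial σ R} {a b : σ →₀ ℕ}
    (h : UniqueAdd p.support q.support a b) : (p * q).coeff (a + b) = p.coeff a * q.coeff b :=
  AddMonoidAlgebra.coeff_mul_add_of_uniqueAdd h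

theorem add_mem_support_mul_of_uniqueAdd [NoZeroDivisors R] {p q : MvPolynomial σ R}
    {a b : σ →₀ ℕ} (ha : a ∈ p.support) (hb : b ∈ q.support)
    (h : UniqueAdd p.support q.support a b) : a + b ∈ (p * q).support := by
  rw [mem_support_iff, coeff_mul_add_of_uniqueAdd h]
  exact mul_ne_zero (mem_support_iff.1 ha) (mem_support_iff.1 hb)

end MvPolynomial

@[simps]
def exponentVector (σ : Type*) : (σ →₀ ℕ) →+ (σ → ℝ) where
  toFun d i := d i
  map_zero' := by ext; simp
  map_add' _ _ := by ext; simp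

theorem exponentVector_injective (σ : Type*) : Function.Injective (exponentVector σ) :=
  fun _ _ h ↦ Finsupp.ext fun i ↦ Nat.cast_injective (R := ℝ) (by simpa using congrFun h i)

theorem MvPolynomial.extremePoints_convexHull_add_subset_image_support_mul {R σ : Type*}
    [CommSemiring R] [NoZeroDivisors R] (p q : MvPolynomial σ R) :
    (convexHull ℝ (exponentVector σ '' p.support + exponentVector σ '' q.support)).extremePoints ℝ
      ⊆ exponentVector σ '' (p * q).support := by
  classical
  set e := exponentVector σ
  intro v hv
  simp only [← Finset.coe_image] at hv
  obtain ⟨_, hea, _, heb, rfl⟩ := extremePoints_convexHull_subset hv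
  obtain ⟨a, ha, rfl⟩ := Finset.mem_image.1 hea
  obtain ⟨b, hb, rfl⟩ := Finset.mem_image.1 heb
  have hunique_image : UniqueAdd (p.support.image e) (q.support.image e) (e a) (e b) :=
    .of_add_mem_extremePoints_convexHull hea heb hv
  have hunique : UniqueAdd p.support q.support a b :=
    (UniqueAdd.addHom_image_iff e.toAddHom (exponentVector_injective σ)).1 hunique_image
  exact ⟨a + b, add_mem_support_mul_of_uniqueAdd ha hb hunique, map_add e a b⟩

theorem newtonPolytope_eq_convexHull_image {k : Type*} [Field k] {n : ℕ}
    (A : MvPolynomial (Fin n) k) :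
    newtonPolytope A = convexHull ℝ (exponentVector (Fin n) '' A.support) :=
  rfl

theorem newtonPolytope_mul_general {k : Type*} [Field k] {n : ℕ} (A B : MvPolynomial (Fin n) k) :
    newtonPolytope (A * B) = newtonPolytope A + newtonPolytope B := by
  classical
  set e := exponentVector (Fin n)
  have hfin (p : MvPolynomial (Fin n) k) : (e '' p.support).Finite :=
    p.support.finite_toSet.image e
  simp only [newtonPolytope_eq_convexHull_image, ← convexHull_add]
  refine subset_antisymm ?_ ?_
  · refine convexHull_mono ?_
    rw [← Set.image_add, ← Finset.coe_add]
    exact Set.image_mono (MvPolynomial.support_mul A B)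
  · exact (hfin A |>.add (hfin B)).isCompact_convexHull ℝ |>.subset_of_extremePoints_subset
      (convex_convexHull ℝ _) ((hfin (A * B)).isClosed_convexHull ℝ) (convex_convexHull ℝ _)
      ((A.extremePoints_convexHull_add_subset_image_support_mul B).trans (subset_convexHull ℝ _))

/-- For nonzero polynomials `A, B` over a field, `NP(AB) = NP(A) + NP(B)` (Minkowski sum). -/
theorem newtonPolytope_mul {k : Type*} [Field k] {n : ℕ} (A B : MvPolynomial (Fin n) k)
    (hA : A ≠ 0) (hB : B ≠ 0) :
    newtonPolytope (A * B) = newtonPolytope A + newtonPolytope B :=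
  newtonPolytope_mul_general A B
end

section
/- Let k be a field of characteristic p and let f = A/B ∈ k[[t₁,…,t_n]] be a rational power series with A, B ∈ k[t₁,…,t_n], deg_{t_i} A ≤ h_i and deg_{t_i} B ≤ h_i for all i, and B having nonzero constant term. Then the k-vector space W = {P/B : P ∈ k[t₁,…,t_n], deg_{t_i} P ≤ h_i for all i}, which has dimension at most (h₁+1)⋯(h_n+1), contains f and is invariant under all section operators S_r, r ∈ {0,…,p-1}ⁿ, when k is perfect. -/
/-!
Write `x = P/B ∈ W` as `x = (P B^{p-1}) / B^p`; the polynomial `C = P B^{p-1}` has partial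
degrees at most `p h_i`. Over a perfect field, grouping the monomials of `C` by their exponents
modulo `p` and taking `p`-th roots of the coefficients gives `C = ∑_r t^r Q_r^p` with
`deg_{t_i} Q_r ≤ h_i`, hence `x = ∑_r t^r (Q_r/B)^p` with every `Q_r/B ∈ W`.
-/

open MvPolynomial

theorem eq_sum_mul_mul_inv_pow {R ι : Type*} [CommSemiring R] {p : ℕ} (hp : 1 ≤ p)
    {x P : R} {u : Rˣ} (hx : x * u = P) (s : Finset ι) (m Q : ι → R)
    (hPQ : P * u ^ (p - 1) = ∑ i ∈ s, m i * Q i ^ p) :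
    x = ∑ i ∈ s, m i * (Q i * ↑u⁻¹) ^ p :=
  calc x = x * u ^ p * ↑u⁻¹ ^ p := by rw [mul_assoc, ← mul_pow, Units.mul_inv, one_pow, mul_one]
    _ = P * u ^ (p - 1) * ↑u⁻¹ ^ p := by
      rw [← hx, mul_assoc x (u : R), ← pow_succ', Nat.sub_add_cancel hp]
    _ = _ := by simp only [hPQ, Finset.sum_mul, mul_pow, mul_assoc]

theorem Submodule.coe_map_mulRight_inv_comp {k M S : Type*} [CommSemiring k] [AddCommMonoid M]
    [Module k M] [CommSemiring S] [Algebra k S] (V : Submodule k M) (φ : M →ₗ[k] S) (u : Sˣ) :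
    (V.map (LinearMap.mulRight k (↑u⁻¹ : S) ∘ₗ φ) : Set S) = {x | ∃ P ∈ V, x * u = φ P} := by
  ext x
  constructor
  · rintro ⟨P, hP, rfl⟩
    exact ⟨P, hP, by simp⟩
  · rintro ⟨P, hP, hx⟩
    exact ⟨P, hP, by simp [← hx]⟩

namespace MvPolynomial

variable {σ R : Type*}

section restrictDegreeOf

variable [CommSemiring R]

noncomputable def restrictDegreeOf (h : σ → ℕ) : Submodule R (MvPolynomial σ R) :=
  restrictSupport R {e | ∀ i, e i ≤ h i}

theorem mem_restrictDegreeOf_iff {h : σ → ℕ} {P : MvPolynomial σ R} :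
    P ∈ restrictDegreeOf h ↔ ∀ i, P.degreeOf i ≤ h i := by
  simp only [restrictDegreeOf, mem_restrictSupport_iff, degreeOf_le_iff]
  exact ⟨fun hP i d hd => hP hd i, fun hP d hd i => hP i d hd⟩

end restrictDegreeOf

theorem rank_restrictDegreeOf [Fintype σ] [CommRing R] [Nontrivial R] (h : σ → ℕ) :
    Module.rank R (restrictDegreeOf (R := R) h) = (∏ i, (h i + 1) : ℕ) := by
  classical
  let e : {d : σ →₀ ℕ | ∀ i, d i ≤ h i} ≃ ∀ i, Fin (h i + 1) :=
    { toFun := fun d i => ⟨d.1 i, Nat.lt_succ_of_le (d.2 i)⟩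
      invFun := fun g => ⟨Finsupp.equivFunOnFinite.symm fun i => g i,
        fun i => Nat.lt_succ_iff.mp (g i).2⟩
      left_inv := fun d => by ext i; simp
      right_inv := fun g => by ext i; simp }
  have : Fintype {d : σ →₀ ℕ | ∀ i, d i ≤ h i} := .ofEquiv _ e.symm
  rw [restrictDegreeOf, rank_eq_card_basis (basisRestrictSupport R _), Fintype.card_congr e]
  simp

theorem degreeOf_mul_pow_le_of_le [CommSemiring R] {P B : MvPolynomial σ R} {i : σ} {m : ℕ}
    (hP : P.degreeOf i ≤ m) (hB : B.degreeOf i ≤ m) (q : ℕ) :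
    (P * B ^ q).degreeOf i ≤ (q + 1) * m :=
  calc (P * B ^ q).degreeOf i ≤ P.degreeOf i + q * B.degreeOf i :=
        (degreeOf_mul_le _ _ _).trans (Nat.add_le_add_left (degreeOf_pow_le _ _ _) _)
    _ ≤ (q + 1) * m := by rw [add_one_mul, add_comm]; gcongr

theorem monomial_eq_C_mul_prod_X_pow [CommSemiring R] [Fintype σ] (d : σ →₀ ℕ) (c : R) :
    monomial d c = C c * ∏ i, X i ^ d i := by
  rw [monomial_eq, Finsupp.prod_fintype _ _ fun _ => pow_zero _]

theorem prod_X_pow_mul_monomial_pow [CommSemiring R] [Fintype σ] {p : ℕ} {r : σ → ℕ}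
    {d : σ →₀ ℕ} (hr : ∀ i, r i = d i % p) (c : R) :
    (∏ i, X i ^ r i) * monomial (d.mapRange (· / p) (Nat.zero_div p)) c ^ p =
      monomial d (c ^ p) := by
  rw [monomial_eq_C_mul_prod_X_pow, monomial_eq_C_mul_prod_X_pow, mul_pow, ← map_pow,
    ← Finset.prod_pow, mul_left_comm, ← Finset.prod_mul_distrib]
  congr 2 with i
  rw [← pow_mul, ← pow_add, hr, Finsupp.mapRange_apply, mul_comm, Nat.mod_add_div]

theorem exists_eq_sum_prod_X_pow_mul_pow [Fintype σ] [DecidableEq σ] {k : Type*} [Field k]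
    {p : ℕ} [ExpChar k p] [PerfectRing k p] (P : MvPolynomial σ k) :
    ∃ Q : (σ → Fin p) → MvPolynomial σ k, (∀ r i, (Q r).degreeOf i ≤ P.degreeOf i / p) ∧
      P = ∑ r, (∏ i, X i ^ (r i : ℕ)) * Q r ^ p := by
  let digits : (σ →₀ ℕ) → σ → Fin p := fun d i => ⟨d i % p, Nat.mod_lt _ (expChar_pos k p)⟩
  refine ⟨fun r => ∑ d ∈ P.support with digits d = r,
      monomial (d.mapRange (· / p) (Nat.zero_div p)) ((frobeniusEquiv k p).symm (P.coeff d)),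
    fun r i => ?_, ?_⟩
  · refine (degreeOf_sum_le _ _ _).trans (Finset.sup_le fun d hd => ?_)
    have hd := (Finset.mem_filter.mp hd).1
    rw [degreeOf_monomial_eq _ _ ((frobeniusEquiv k p).symm.map_ne_zero_iff.mpr
      (mem_support_iff.mp hd)), Finsupp.mapRange_apply]
    exact Nat.div_le_div_right (le_degreeOf_of_mem_support i hd)
  · calc P = ∑ d ∈ P.support, monomial d (P.coeff d) := P.as_sum
      _ = ∑ r, ∑ d ∈ P.support with digits d = r, monomial d (P.coeff d) :=
        (Finset.sum_fiberwise _ _ _).symm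
      _ = _ := Finset.sum_congr rfl fun r _ => by
        rw [sum_pow_char, Finset.mul_sum]
        refine Finset.sum_congr rfl fun d hd => ?_
        rw [prod_X_pow_mul_monomial_pow (fun i => by rw [← (Finset.mem_filter.mp hd).2]),
          frobeniusEquiv_symm_pow_p]

end MvPolynomial

theorem rational_invariant_space_general (k : Type*) [Field k] (p : ℕ)
    [ExpChar k p] [PerfectRing k p] (n : ℕ) (h : Fin n → ℕ) (A B : MvPolynomial (Fin n) k)
    (hB0 : MvPolynomial.coeff (0 : Fin n →₀ ℕ) B ≠ 0)
    (hdA : ∀ i, A.degreeOf i ≤ h i) (hdB : ∀ i, B.degreeOf i ≤ h i)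
    (f : MvPowerSeries (Fin n) k)
    (hf : f * MvPolynomial.coeToMvPowerSeries.ringHom B =
      MvPolynomial.coeToMvPowerSeries.ringHom A) :
    ∃ W : Submodule k (MvPowerSeries (Fin n) k),
      (W : Set (MvPowerSeries (Fin n) k)) =
        {x | ∃ P : MvPolynomial (Fin n) k, (∀ i, P.degreeOf i ≤ h i) ∧
          x * MvPolynomial.coeToMvPowerSeries.ringHom B =
            MvPolynomial.coeToMvPowerSeries.ringHom P} ∧
      Module.rank k W ≤ (∏ i, (h i + 1) : ℕ) ∧
      f ∈ W ∧
      (∀ x ∈ W, ∃ s : (Fin n → Fin p) → MvPowerSeries (Fin n) k, (∀ r, s r ∈ W) ∧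
        x = ∑ r : Fin n → Fin p,
          (∏ i, (MvPowerSeries.X i : MvPowerSeries (Fin n) k) ^ ((r i : ℕ))) * (s r) ^ p) := by
  let φ : MvPolynomial (Fin n) k →ₐ[k] MvPowerSeries (Fin n) k := coeToMvPowerSeries.algHom k
  have hφ (P : MvPolynomial (Fin n) k) : φ P = coeToMvPowerSeries.ringHom P := by simp [φ]
  obtain ⟨u, hu⟩ : IsUnit (φ B) := by
    rw [MvPowerSeries.isUnit_iff_constantCoeff, hφ,
      ← MvPowerSeries.coeff_zero_eq_constantCoeff_apply, coeToMvPowerSeries.ringHom_apply,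
      coeff_coe]
    exact hB0.isUnit
  let W := (restrictDegreeOf h).map (LinearMap.mulRight k ↑u⁻¹ ∘ₗ φ.toLinearMap)
  have hW : (W : Set (MvPowerSeries (Fin n) k)) = {x | ∃ P : MvPolynomial (Fin n) k,
      (∀ i, P.degreeOf i ≤ h i) ∧
        x * coeToMvPowerSeries.ringHom B = coeToMvPowerSeries.ringHom P} := by
    refine (Submodule.coe_map_mulRight_inv_comp _ _ _).trans ?_
    simp only [mem_restrictDegreeOf_iff, AlgHom.toLinearMap_apply, hu, hφ]
  have hmem (x) : x ∈ W ↔ _ := Set.ext_iff.mp hW x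
  refine ⟨W, hW, (rank_map_le _ _).trans (rank_restrictDegreeOf h).le,
    (hmem f).2 ⟨A, hdA, hf⟩, fun x hx => ?_⟩
  obtain ⟨P, hdP, hx⟩ := (hmem x).1 hx
  rw [← hφ, ← hφ, ← hu] at hx
  obtain ⟨Q, hdQ, hQ⟩ := exists_eq_sum_prod_X_pow_mul_pow (p := p) (P * B ^ (p - 1))
  have hp : 1 ≤ p := expChar_pos k p
  have hdeg (i) : (P * B ^ (p - 1)).degreeOf i ≤ p * h i := by
    simpa only [Nat.sub_add_cancel hp] using degreeOf_mul_pow_le_of_le (hdP i) (hdB i) (p - 1)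
  refine ⟨fun r => φ (Q r) * ↑u⁻¹,
    fun r => (hmem _).2 ⟨Q r, fun i => (hdQ r i).trans (Nat.div_le_of_le_mul (hdeg i)), ?_⟩, ?_⟩
  · rw [← hφ, ← hφ, ← hu, Units.inv_mul_cancel_right]
  · refine eq_sum_mul_mul_inv_pow hp hx _ _ _ ?_
    rw [hu, ← map_pow, ← map_mul, hQ]
    simp only [map_sum, map_mul, map_prod, map_pow, hφ, coeToMvPowerSeries.ringHom_apply, coe_X]

/-- For a rational power series `f = A/B ∈ k[[t₁,…,t_n]]` (with `B(0) ≠ 0` and all partial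
degrees of `A, B` at most `h_i`), the `k`-vector space `W = {P/B : deg_{t_i} P ≤ h_i}` has
dimension at most `∏ (h_i + 1)`, contains `f`, and (for `k` perfect of characteristic `p`)
is invariant under all section operators, i.e. every `x ∈ W` decomposes as
`x = ∑_{r ∈ {0,…,p-1}ⁿ} t^r (s_r)^p` with all `s_r ∈ W`. -/
theorem rational_invariant_space (k : Type*) [Field k] (p : ℕ) [Fact p.Prime] [CharP k p]
    [ExpChar k p] [PerfectRing k p] (n : ℕ) (h : Fin n → ℕ) (A B : MvPolynomial (Fin n) k)
    (hB0 : MvPolynomial.coeff (0 : Fin n →₀ ℕ) B ≠ 0)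
    (hdA : ∀ i, A.degreeOf i ≤ h i) (hdB : ∀ i, B.degreeOf i ≤ h i)
    (f : MvPowerSeries (Fin n) k)
    (hf : f * MvPolynomial.coeToMvPowerSeries.ringHom B =
      MvPolynomial.coeToMvPowerSeries.ringHom A) :
    ∃ W : Submodule k (MvPowerSeries (Fin n) k),
      (W : Set (MvPowerSeries (Fin n) k)) =
        {x | ∃ P : MvPolynomial (Fin n) k, (∀ i, P.degreeOf i ≤ h i) ∧
          x * MvPolynomial.coeToMvPowerSeries.ringHom B =
            MvPolynomial.coeToMvPowerSeries.ringHom P} ∧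
      Module.rank k W ≤ (∏ i, (h i + 1) : ℕ) ∧
      f ∈ W ∧
      (∀ x ∈ W, ∃ s : (Fin n → Fin p) → MvPowerSeries (Fin n) k, (∀ r, s r ∈ W) ∧
        x = ∑ r : Fin n → Fin p,
          (∏ i, (MvPowerSeries.X i : MvPowerSeries (Fin n) k) ^ ((r i : ℕ))) * (s r) ^ p) :=
  rational_invariant_space_general k p n h A B hB0 hdA hdB f hf
end
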